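/- arXiv:1110.5915 — 3 statements merged into one kernel-verified Lean document; each statement's English description precedes it below -/
import Mathlib

section
/- Let A be an m×n matrix over F_2 and b ∈ F_2^m, where the sum of all rows of A is zero, no proper nonempty subset of rows of A sums to zero, and the sum of the entries of b equals 1. Then for every x ∈ F_2^n at least one equation of Ax = b is falsified, and moreover for every index i ∈ {1,...,m} there exists x ∈ F_2^n satisfying all equations of Ax = b except possibly the i-th one (in fact falsifying exactly the i-th). -/
/-!
Over `𝔽₂` a vector `c` with `c ᵥ* A = 0` is the indicator of a set of rows of `A` summing to
zero, so the hypotheses say that the left kernel of `A` is `{0, 1}`. By the Fredholm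
alternative, `A *ᵥ x = y` is then solvable exactly when `∑ j, y j = 0`. This fails for `y = b`
and holds for `y = b + Pi.single i 1`, whose solutions violate precisely the `i`-th equation.
-/

open Matrix

theorem Matrix.exists_mulVec_eq_iff_forall_vecMul_eq_zero {K m n : Type*} [Field K]
    [Fintype m] [DecidableEq m] [Fintype n] (A : Matrix m n K) (y : m → K) :
    (∃ x, A *ᵥ x = y) ↔ ∀ c, c ᵥ* A = 0 → c ⬝ᵥ y = 0 := by
  constructor
  · rintro ⟨x, rfl⟩ c hc
    rw [dotProduct_mulVec, hc, zero_dotProduct]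
  · intro h
    change y ∈ LinearMap.range A.mulVecLin
    rw [← Subspace.forall_mem_dualAnnihilator_apply_eq_zero_iff]
    intro f hf
    obtain ⟨c, rfl⟩ := (dotProductEquiv K m).surjective f
    refine h c (dotProduct_eq_zero _ fun x => ?_)
    rw [← dotProduct_mulVec]
    exact (Submodule.mem_dualAnnihilator _).1 hf _ ⟨x, rfl⟩

theorem ZMod.two_eq_zero_or_eq_one (a : ZMod 2) : a = 0 ∨ a = 1 := by
  revert a; decide

section ZModTwo

variable {m n : Type*} [Fintype m]

theorem ZMod.two_vecMul_eq_sum_filter (c : m → ZMod 2) (A : Matrix m n (ZMod 2)) :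
    c ᵥ* A = ∑ j with c j = 1, A j := by
  rw [vecMul_eq_sum, Finset.sum_filter (fun j => c j = 1) (fun j => A j)]
  refine Finset.sum_congr rfl fun j _ => ?_
  rcases ZMod.two_eq_zero_or_eq_one (c j) with h | h <;> simp [h]

theorem ZMod.two_eq_zero_or_eq_one_of_vecMul_eq_zero {A : Matrix m n (ZMod 2)}
    (hsub : ∀ s : Finset m, s.Nonempty → s ≠ Finset.univ → ∑ i ∈ s, A i ≠ 0)
    {c : m → ZMod 2} (hc : c ᵥ* A = 0) : c = 0 ∨ c = 1 := by
  by_contra! hc01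
  obtain ⟨j₀, hj₀⟩ := Function.ne_iff.1 hc01.1
  obtain ⟨j₁, hj₁⟩ := Function.ne_iff.1 hc01.2
  replace hj₀ : c j₀ = 1 := (ZMod.two_eq_zero_or_eq_one _).resolve_left hj₀
  refine hsub {j | c j = 1} ⟨j₀, by simpa using hj₀⟩
    (fun h => hj₁ (by simpa using Finset.eq_univ_iff_forall.1 h j₁))
    (by rwa [← ZMod.two_vecMul_eq_sum_filter])

theorem ZMod.two_exists_mulVec_eq_iff_sum_eq_zero [DecidableEq m] [Fintype n]
    {A : Matrix m n (ZMod 2)} (hsum : ∑ i, A i = 0)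
    (hsub : ∀ s : Finset m, s.Nonempty → s ≠ Finset.univ → ∑ i ∈ s, A i ≠ 0) (y : m → ZMod 2) :
    (∃ x, A *ᵥ x = y) ↔ ∑ j, y j = 0 := by
  have hone : (1 : m → ZMod 2) ᵥ* A = 0 := by simpa [vecMul_eq_sum] using hsum
  rw [exists_mulVec_eq_iff_forall_vecMul_eq_zero]
  refine ⟨fun h => one_dotProduct y ▸ h 1 hone, fun hy c hc => ?_⟩
  rcases ZMod.two_eq_zero_or_eq_one_of_vecMul_eq_zero hsub hc with rfl | rfl
  · exact zero_dotProduct y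
  · rwa [one_dotProduct]

end ZModTwo

theorem stmt_13 (m n : ℕ) (A : Matrix (Fin m) (Fin n) (ZMod 2)) (b : Fin m → ZMod 2)
    (hsum : ∑ i, A i = 0)
    (hsub : ∀ s : Finset (Fin m), s.Nonempty → s ≠ Finset.univ → ∑ i ∈ s, A i ≠ 0)
    (hb : ∑ i, b i = 1) :
    (∀ x : Fin n → ZMod 2, ∃ j, A.mulVec x j ≠ b j) ∧
    (∀ i : Fin m, ∃ x : Fin n → ZMod 2, ∀ j, A.mulVec x j ≠ b j ↔ j = i) := by
  have solvable := ZMod.two_exists_mulVec_eq_iff_sum_eq_zero hsum hsub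
  refine ⟨fun x => ?_, fun i => ?_⟩
  · by_contra! h
    simpa [hb] using (solvable b).1 ⟨x, funext h⟩
  · obtain ⟨x, hx⟩ := (solvable (b + Pi.single i 1)).2 <| by
      simp only [Pi.add_apply, Finset.sum_add_distrib, hb, Finset.sum_pi_single',
        Finset.mem_univ, if_true]
      decide
    refine ⟨x, fun j => ?_⟩
    by_cases hj : j = i <;> simp [hx, hj]
end

section
/- Consider a weighted system S of linear equations over F_2 in which each variable appears in at most 2 equations, and suppose two equations e_1, e_2 (with weights w_1, w_2) share a variable x_i. Let w* = min(w_1, w_2), and let S' be obtained from S by replacing e_1 and e_2 by their sum (over F_2) with weight w*. Then the minimum total weight of falsified equations over all assignments is the same for S and S'. -/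
/-!
By the degree bound, the shared variable `x i₀` occurs in `e₁` and `e₂` only. Flipping it
toggles the truth of `e₁` and of `e₂` and of nothing else, and leaves their sum untouched.
Hence the merged system charges an assignment `x` exactly the smaller of what `S` charges `x`
and its flip: if `e₁`, `e₂` are both satisfied or both violated, one of the two satisfies both;
otherwise each violates exactly one of them. Minimizing over `x` gives the same optimum.
-/

open Finset

/-- Total weight of the equations among the index set `J` falsified by assignment `x`. -/
def falsifiedWeight {n m : ℕ} (I : Fin m → Finset (Fin n)) (b : Fin m → ZMod 2)
    (w : Fin m → ℕ) (J : Finset (Fin m)) (x : Fin n → ZMod 2) : ℕ :=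
  ∑ j ∈ J.filter (fun j => ∑ i ∈ I j, x i ≠ b j), w j

namespace ZMod

lemma add_one_ne_iff_not_ne (s b : ZMod 2) : s + 1 ≠ b ↔ ¬s ≠ b := by
  revert s b; decide

lemma add_ne_add_iff_not_iff (s₁ s₂ b₁ b₂ : ZMod 2) :
    s₁ + s₂ ≠ b₁ + b₂ ↔ ¬(s₁ ≠ b₁ ↔ s₂ ≠ b₂) := by
  revert s₁ s₂ b₁ b₂; decide

end ZMod

lemma Finset.sum_symmDiff_zmod_two {α : Type*} [DecidableEq α] (A B : Finset α)
    (x : α → ZMod 2) : ∑ i ∈ symmDiff A B, x i = ∑ i ∈ A, x i + ∑ i ∈ B, x i := by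
  have hsdiff : ∑ i ∈ (A ∪ B) \ (A ∩ B), x i + ∑ i ∈ A ∩ B, x i = ∑ i ∈ A ∪ B, x i :=
    sum_sdiff inter_subset_union
  have hcc : ∀ c : ZMod 2, c + c = 0 := by decide
  rw [symmDiff_eq_sup_sdiff_inf]
  linear_combination
    hsdiff + sum_union_inter (s₁ := A) (s₂ := B) (f := x) - hcc (∑ i ∈ A ∩ B, x i)

lemma Finset.sum_add_single_apply {α M : Type*} [DecidableEq α] [AddCommMonoid M]
    (s : Finset α) (x : α → M) (a : α) (c : M) :
    ∑ i ∈ s, (x + Pi.single a c : α → M) i = ∑ i ∈ s, x i + if a ∈ s then c else 0 := by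
  simp only [Pi.add_apply, sum_add_distrib, sum_pi_single']

lemma Finset.eq_or_eq_of_card_le_two {α : Type*} {s : Finset α} (hs : #s ≤ 2) {a b c : α}
    (ha : a ∈ s) (hb : b ∈ s) (hc : c ∈ s) (hab : a ≠ b) : c = a ∨ c = b := by
  by_contra! h
  exact (two_lt_card.2 ⟨a, ha, b, hb, c, hc, hab, h.1.symm, h.2.symm⟩).not_ge hs

lemma min_ite_add_ite_not (p q : Prop) [Decidable p] [Decidable q] (a b : ℕ) :
    min ((if p then a else 0) + (if q then b else 0))
        ((if ¬p then a else 0) + (if ¬q then b else 0)) =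
      if ¬(p ↔ q) then min a b else 0 := by
  by_cases hp : p <;> by_cases hq : q <;> simp [hp, hq, min_comm]

lemma ciInf_min_comp_eq {α β : Type*} [Nonempty α] [ConditionallyCompleteLinearOrderBot β]
    (f : α → β) (σ : α → α) : ⨅ x, min (f x) (f (σ x)) = ⨅ x, f x := by
  have hbdd : BddBelow (Set.range f) := OrderBot.bddBelow _
  refine le_antisymm (ciInf_mono (OrderBot.bddBelow _) fun x => min_le_left _ _) ?_
  exact le_ciInf fun x => le_min (ciInf_le hbdd x) (ciInf_le hbdd (σ x))

section falsifiedWeight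

variable {n m : ℕ} (I : Fin m → Finset (Fin n)) (b : Fin m → ZMod 2) (w : Fin m → ℕ)

lemma falsifiedWeight_univ_eq {j₁ j₂ : Fin m} (hne : j₁ ≠ j₂) (x : Fin n → ZMod 2) :
    falsifiedWeight I b w univ x =
      falsifiedWeight I b w (univ \ {j₁, j₂}) x
        + ((if ∑ i ∈ I j₁, x i ≠ b j₁ then w j₁ else 0)
        + (if ∑ i ∈ I j₂, x i ≠ b j₂ then w j₂ else 0)) := by
  unfold falsifiedWeight
  rw [sum_filter, sum_filter, ← sum_sdiff (subset_univ {j₁, j₂}), sum_pair hne]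

lemma falsifiedWeight_add_single_of_notMem {J : Finset (Fin m)} {i₀ : Fin n}
    (hJ : ∀ j ∈ J, i₀ ∉ I j) (x : Fin n → ZMod 2) (c : ZMod 2) :
    falsifiedWeight I b w J (x + Pi.single i₀ c) = falsifiedWeight I b w J x := by
  unfold falsifiedWeight
  congr 1
  exact filter_congr fun j hj => by rw [sum_add_single_apply, if_neg (hJ j hj), add_zero]

lemma falsifiedWeight_merge_eq_min {j₁ j₂ : Fin m} (hne : j₁ ≠ j₂) {i₀ : Fin n}
    (h₁ : i₀ ∈ I j₁) (h₂ : i₀ ∈ I j₂) (hI : ∀ j ∈ univ \ {j₁, j₂}, i₀ ∉ I j)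
    (x : Fin n → ZMod 2) :
    falsifiedWeight I b w (univ \ {j₁, j₂}) x +
        (if ∑ i ∈ symmDiff (I j₁) (I j₂), x i ≠ b j₁ + b j₂ then min (w j₁) (w j₂) else 0) =
      min (falsifiedWeight I b w univ x) (falsifiedWeight I b w univ (x + Pi.single i₀ 1)) := by
  rw [falsifiedWeight_univ_eq I b w hne, falsifiedWeight_univ_eq I b w hne,
    falsifiedWeight_add_single_of_notMem I b w hI, min_add_add_left]
  simp only [sum_add_single_apply, if_pos h₁, if_pos h₂, ZMod.add_one_ne_iff_not_ne,
    sum_symmDiff_zmod_two, ZMod.add_ne_add_iff_not_iff, min_ite_add_ite_not]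

end falsifiedWeight

theorem stmt_15_general (n m : ℕ) (I : Fin m → Finset (Fin n)) (b : Fin m → ZMod 2)
    (w : Fin m → ℕ)
    (hdeg : ∀ i : Fin n, (Finset.univ.filter (fun j => i ∈ I j)).card ≤ 2)
    (j₁ j₂ : Fin m) (hne : j₁ ≠ j₂) (i₀ : Fin n) (h₁ : i₀ ∈ I j₁) (h₂ : i₀ ∈ I j₂) :
    sInf {W | ∃ x : Fin n → ZMod 2, W = falsifiedWeight I b w Finset.univ x} =
    sInf {W | ∃ x : Fin n → ZMod 2,
      W = falsifiedWeight I b w (Finset.univ \ {j₁, j₂}) x +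
          (if ∑ i ∈ symmDiff (I j₁) (I j₂), x i ≠ b j₁ + b j₂
            then min (w j₁) (w j₂) else 0)} := by
  have hI : ∀ j ∈ univ \ {j₁, j₂}, i₀ ∉ I j := fun j hj hj₀ => by
    have := eq_or_eq_of_card_le_two (hdeg i₀) (by simpa using h₁) (by simpa using h₂)
      (by simpa using hj₀) hne
    simp_all
  have sInf_eq_iInf (F : (Fin n → ZMod 2) → ℕ) : sInf {W | ∃ x, W = F x} = ⨅ x, F x := by
    simp only [iInf, Set.range, eq_comm]
  simp only [sInf_eq_iInf, falsifiedWeight_merge_eq_min I b w hne h₁ h₂ hI]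
  exact (ciInf_min_comp_eq _ _).symm

theorem stmt_15 (n m : ℕ) (I : Fin m → Finset (Fin n)) (b : Fin m → ZMod 2)
    (w : Fin m → ℕ) (hw : ∀ j, 0 < w j)
    (hdeg : ∀ i : Fin n, (Finset.univ.filter (fun j => i ∈ I j)).card ≤ 2)
    (j₁ j₂ : Fin m) (hne : j₁ ≠ j₂) (i₀ : Fin n) (h₁ : i₀ ∈ I j₁) (h₂ : i₀ ∈ I j₂) :
    sInf {W | ∃ x : Fin n → ZMod 2, W = falsifiedWeight I b w Finset.univ x} =
    sInf {W | ∃ x : Fin n → ZMod 2,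
      W = falsifiedWeight I b w (Finset.univ \ {j₁, j₂}) x +
          (if ∑ i ∈ symmDiff (I j₁) (I j₂), x i ≠ b j₁ + b j₂
            then min (w j₁) (w j₂) else 0)} :=
  stmt_15_general n m I b w hdeg j₁ j₂ hne i₀ h₁ h₂
end

section
/- Let S be a system of equations over F_2 containing the equation x_i + x_j = 0 with weight w, and let S' be obtained from S by replacing this equation with the two equations x_i + y = 1 and x_j + y = 1, each of weight w, where y is a new variable not occurring in S. Then the minimum total weight of falsified equations over all assignments is the same for S and S'. -/
open Finset

/-!
Both systems agree off the replaced equation, so it suffices to compare, for fixed values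
`a = x i₁` and `c = x i₂`, the cost of `a + c = 0` with the cheapest cost of the gadget
`a + y = 1`, `c + y = 1` over `y`. If both gadget equations hold then `a + c = 0`, so the gadget
costs at least as much; and `y = a + 1` satisfies the first gadget equation while the second then
holds exactly when `a + c = 0`, so the minimum is attained.
-/

theorem falsifiedWeight_eq_erase_add {n m : ℕ} (I : Fin m → Finset (Fin n))
    (b : Fin m → ZMod 2) (w : Fin m → ℕ) {J : Finset (Fin m)} {j : Fin m} (hj : j ∈ J)
    (x : Fin n → ZMod 2) :
    falsifiedWeight I b w J x =
      falsifiedWeight I b w (J.erase j) x + if ∑ i ∈ I j, x i ≠ b j then w j else 0 := by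
  unfold falsifiedWeight
  rw [sum_filter, sum_filter, ← add_sum_erase J _ hj, add_comm]

section Gadget

variable (w : ℕ) (a c : ZMod 2)

theorem ite_add_ne_zero_le_ite_add_ite (y : ZMod 2) :
    (if a + c ≠ 0 then w else 0) ≤
      (if a + y ≠ 1 then w else 0) + (if c + y ≠ 1 then w else 0) := by
  have h : a + y = 1 → c + y = 1 → a + c = 0 := by revert a c y; decide
  split_ifs <;> simp_all

theorem ite_add_ite_add_one_eq_ite_add_ne_zero :
    (if a + (a + 1) ≠ 1 then w else 0) + (if c + (a + 1) ≠ 1 then w else 0) =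
      if a + c ≠ 0 then w else 0 := by
  have h₁ : a + (a + 1) = 1 := by revert a; decide
  have h₂ : c + (a + 1) = 1 ↔ a + c = 0 := by revert a c; decide
  simp only [h₁, ne_eq, h₂, not_true_eq_false, if_false, zero_add]

end Gadget

theorem stmt_16_general (n m : ℕ) (I : Fin m → Finset (Fin n)) (b : Fin m → ZMod 2)
    (w : Fin m → ℕ)
    (j₀ : Fin m) (i₁ i₂ : Fin n) (hne : i₁ ≠ i₂)
    (hI : I j₀ = {i₁, i₂}) (hb : b j₀ = 0) :
    sInf {W | ∃ x : Fin n → ZMod 2, W = falsifiedWeight I b w Finset.univ x} =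
    sInf {W | ∃ x : Fin n → ZMod 2, ∃ y : ZMod 2,
      W = falsifiedWeight I b w (Finset.univ.erase j₀) x +
          (if x i₁ + y ≠ 1 then w j₀ else 0) +
          (if x i₂ + y ≠ 1 then w j₀ else 0)} := by
  have hsplit (x : Fin n → ZMod 2) : falsifiedWeight I b w univ x =
      falsifiedWeight I b w (univ.erase j₀) x + if x i₁ + x i₂ ≠ 0 then w j₀ else 0 := by
    rw [falsifiedWeight_eq_erase_add I b w (mem_univ j₀), hI, sum_pair hne, hb]
  apply csInf_eq_csInf_of_forall_exists_le
  · rintro _ ⟨x, rfl⟩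
    refine ⟨_, ⟨x, x i₁ + 1, rfl⟩, ?_⟩
    rw [hsplit, add_assoc, ite_add_ite_add_one_eq_ite_add_ne_zero]
  · rintro _ ⟨x, y, rfl⟩
    refine ⟨_, ⟨x, rfl⟩, ?_⟩
    rw [hsplit, add_assoc]
    exact Nat.add_le_add_left (ite_add_ne_zero_le_ite_add_ite _ _ _ y) _

theorem stmt_16 (n m : ℕ) (I : Fin m → Finset (Fin n)) (b : Fin m → ZMod 2)
    (w : Fin m → ℕ) (hw : ∀ j, 0 < w j)
    (j₀ : Fin m) (i₁ i₂ : Fin n) (hne : i₁ ≠ i₂)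
    (hI : I j₀ = {i₁, i₂}) (hb : b j₀ = 0) :
    sInf {W | ∃ x : Fin n → ZMod 2, W = falsifiedWeight I b w Finset.univ x} =
    sInf {W | ∃ x : Fin n → ZMod 2, ∃ y : ZMod 2,
      W = falsifiedWeight I b w (Finset.univ.erase j₀) x +
          (if x i₁ + y ≠ 1 then w j₀ else 0) +
          (if x i₂ + y ≠ 1 then w j₀ else 0)} :=
  stmt_16_general n m I b w j₀ i₁ i₂ hne hI hb
end
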